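/- Let X be a metric space, let x ∈ X and r > 0, let ε > 0, and let U be a set of formal balls of X. Suppose that for every formal ball b(y,s) with s ≤ ε and b(y,s) ≤ b(x,r) (i.e. d(y,x) ≤ r − s), there exists b(z,t) ∈ U with b(y,s) ≤ b(z,t) (i.e. d(y,z) ≤ t − s). Then the open ball B(x,r) is contained in the union ⋃ { B(z,t) : b(z,t) ∈ U }. -/

import Mathlib

/-- A point `w` of the open ball `B(x,r)` is the centre of a formal ball of radius at most `ε`
lying below `b(x,r)`, and any formal ball above that one contains `w` in its open ball. -/
theorem stmt_3_general {X : Type*} [MetricSpace X] (x : X) (r ε : ℝ)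
    (hε : 0 < ε) (U : Set (X × ℝ))
    (hcov : ∀ (y : X) (s : ℝ), 0 < s → s ≤ ε → dist y x ≤ r - s →
      ∃ p ∈ U, dist y p.1 ≤ p.2 - s) :
    Metric.ball x r ⊆ ⋃ p ∈ U, Metric.ball p.1 p.2 := by
  intro w hw
  have hwx : dist w x < r := hw
  obtain ⟨s, hs_pos, hs_le, hs_below⟩ : ∃ s, 0 < s ∧ s ≤ ε ∧ dist w x ≤ r - s :=
    ⟨min ε (r - dist w x), lt_min hε (by linarith), min_le_left _ _,
      by linarith [min_le_right ε (r - dist w x)]⟩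
  obtain ⟨p, hpU, hwp⟩ := hcov w s hs_pos hs_le hs_below
  exact Set.mem_biUnion hpU (Metric.mem_ball.2 (by linarith))

/-- pointwise soundness of the elementary cover relation
`b(x,r) ◁_ε U` of the localic completion: if every formal ball of radius at
most `ε` below `b(x,r)` lies below some member of `U`, then
`B(x,r) ⊆ ⋃ {B(z,t) : b(z,t) ∈ U}`.  A formal ball is a pair `(z,t) : X × ℝ`
with `t > 0`. -/
theorem stmt_3 {X : Type*} [MetricSpace X] (x : X) (r ε : ℝ)
    (hr : 0 < r) (hε : 0 < ε) (U : Set (X × ℝ)) (hU : ∀ p ∈ U, 0 < p.2)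
    (hcov : ∀ (y : X) (s : ℝ), 0 < s → s ≤ ε → dist y x ≤ r - s →
      ∃ p ∈ U, dist y p.1 ≤ p.2 - s) :
    Metric.ball x r ⊆ ⋃ p ∈ U, Metric.ball p.1 p.2 :=
  stmt_3_general x r ε hε U hcov
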